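/- Let (V, μ) be a connected locally finite weighted graph with μ(x) ≥ b > 0 for all x, and 1 < p ≤ 2 with conjugate exponent q. Then g_q(o,o) ≥ ∑_{n=0}^∞ ( ∑_{m=n}^∞ p_m(o,o) )^{q−1}, where p_m(o,o) is the on-diagonal heat kernel. -/

import Mathlib

open scoped ENNReal

/-- Vertex weight `μ(x) = ∑_y μ_{xy}` of a weighted graph. -/
noncomputable def vertexWeight {V : Type*} (μ : V → V → ℝ≥0∞) (x : V) : ℝ≥0∞ := ∑' y, μ x y

/-- Transition kernel `P(x,y) = μ_{xy}/μ(x)` of the random walk. -/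
noncomputable def transKer {V : Type*} (μ : V → V → ℝ≥0∞) (x y : V) : ℝ≥0∞ :=
  μ x y / vertexWeight μ x

open Classical in
/-- Transition kernel of the walk killed on exiting `U`. -/
noncomputable def killedKer {V : Type*} (μ : V → V → ℝ≥0∞) (U : Set V) (x y : V) : ℝ≥0∞ :=
  if x ∈ U ∧ y ∈ U then transKer μ x y else 0

open Classical in
/-- `n`-step iterates `P^U_n` of the killed kernel, with `P^U_0 = I_U`. -/
noncomputable def killedKerN {V : Type*} (μ : V → V → ℝ≥0∞) (U : Set V) : ℕ → V → V → ℝ≥0∞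
  | 0 => fun x y => if x = y ∧ x ∈ U then 1 else 0
  | n + 1 => fun x y => ∑' z, killedKer μ U x z * killedKerN μ U n z y

/-- Killed Green function `g^U(x,y) = ∑_n P^U_n(x,y)/μ(y)`. -/
noncomputable def greenKilled {V : Type*} (μ : V → V → ℝ≥0∞) (U : Set V) (x y : V) : ℝ≥0∞ :=
  ∑' n, killedKerN μ U n x y / vertexWeight μ y

/-- Green function `g(x,y) = ∑_n pₙ(x,y)` of the graph. -/
noncomputable def green {V : Type*} (μ : V → V → ℝ≥0∞) (x y : V) : ℝ≥0∞ :=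
  greenKilled μ Set.univ x y

/-- Killed Green operator `G^U f(x) = ∑_{y∈U} g^U(x,y) f(y) μ(y)`. -/
noncomputable def greenOp {V : Type*} (μ : V → V → ℝ≥0∞) (U : Set V) (f : V → ℝ≥0∞) (x : V) :
    ℝ≥0∞ :=
  ∑' y, greenKilled μ U x y * f y * vertexWeight μ y

/-- The `L^q`-Green function `g_q(x,y) = ∑_z g(x,z) g(z,y)^{q-1} μ(z)`. -/
noncomputable def greenQ {V : Type*} (μ : V → V → ℝ≥0∞) (q : ℝ) (x y : V) : ℝ≥0∞ :=
  ∑' z, green μ x z * green μ z y ^ (q - 1) * vertexWeight μ z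

/-- The `μ`-weighted `L^q(U)` norm. -/
noncomputable def lqNorm {V : Type*} (μ : V → V → ℝ≥0∞) (U : Set V) (q : ℝ) (h : V → ℝ≥0∞) :
    ℝ≥0∞ :=
  (∑' x, U.indicator (fun x => h x ^ q * vertexWeight μ x) x) ^ (1 / q)

/-- The `L^p`-capacity `C_p(K,U)`:
`sup { ν(K)^p : ν = fμ, f ∈ ℓ⁺(K), ‖G^U f‖_{L^q(U)} ≤ 1 }`, `1/p + 1/q = 1`. -/
noncomputable def lpCap {V : Type*} (μ : V → V → ℝ≥0∞) (p q : ℝ) (K : Finset V) (U : Set V) :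
    ℝ≥0∞ :=
  ⨆ f ∈ {f : V → ℝ≥0∞ | (∀ x, x ∉ K → f x = 0) ∧ lqNorm μ U q (greenOp μ U f) ≤ 1},
    (∑ x ∈ K, f x * vertexWeight μ x) ^ p

/-- A weighted graph is locally finite if every vertex has finitely many neighbours. -/
def LocallyFinite' {V : Type*} (μ : V → V → ℝ≥0∞) : Prop :=
  ∀ x, (Function.support (μ x)).Finite

/-!
Write `g(o,z) μ(z) = ∑ₙ Pₙ(o,z)` and exchange sums, so that
`g_q(o,o) = ∑ₙ ∑_z Pₙ(o,z) g(z,o)^{q-1}`. For each `n`, `Pₙ(o,·)` is a probability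
distribution, so Jensen's inequality for `t ↦ t^{q-1}` (convex as `q ≥ 2`) bounds the inner
sum below by `(∑_z Pₙ(o,z) g(z,o))^{q-1}`, and by Chapman–Kolmogorov
`∑_z Pₙ(o,z) g(z,o) = ∑ₘ p_{n+m}(o,o)`.
-/

theorem ENNReal.rpow_sum_mul_le_sum_mul_rpow_of_sum_le_one {ι : Type*} (s : Finset ι)
    (w z : ι → ℝ≥0∞) (hw : ∑ i ∈ s, w i ≤ 1) {p : ℝ} (hp : 1 ≤ p) :
    (∑ i ∈ s, w i * z i) ^ p ≤ ∑ i ∈ s, w i * z i ^ p := by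
  -- pad the weights to a probability vector with an extra point of value `0`
  have := ENNReal.rpow_arith_mean_le_arith_mean_rpow s.insertNone
    (fun i => i.elim (1 - ∑ i ∈ s, w i) w) (fun i => i.elim 0 z)
    (by simp [Finset.sum_insertNone, tsub_add_cancel_of_le hw]) hp
  simpa [Finset.sum_insertNone, ENNReal.zero_rpow_of_pos (zero_lt_one.trans_le hp)] using this

theorem ENNReal.rpow_tsum_mul_le_tsum_mul_rpow_of_tsum_le_one {ι : Type*} (w z : ι → ℝ≥0∞)
    (hw : ∑' i, w i ≤ 1) {p : ℝ} (hp : 1 ≤ p) :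
    (∑' i, w i * z i) ^ p ≤ ∑' i, w i * z i ^ p := by
  have hp0 : 0 < p := zero_lt_one.trans_le hp
  rw [ENNReal.tsum_eq_iSup_sum, (ENNReal.monotone_rpow_of_nonneg hp0.le).map_iSup_of_continuousAt
    ENNReal.continuous_rpow_const.continuousAt (ENNReal.zero_rpow_of_pos hp0)]
  exact iSup_le fun s => (rpow_sum_mul_le_sum_mul_rpow_of_sum_le_one s w z
    ((ENNReal.sum_le_tsum s).trans hw) hp).trans (ENNReal.sum_le_tsum s)

lemma two_le_of_one_div_add_one_div_eq_one {p q : ℝ} (hp1 : 1 < p) (hp2 : p ≤ 2)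
    (hpq : 1 / p + 1 / q = 1) : 2 ≤ q := by
  have hq : q = p / (p - 1) := (Real.HolderConjugate.conjugate_eq
    (Real.holderConjugate_iff.2 ⟨hp1, by simpa using hpq⟩)).symm ▸ rfl
  rw [hq, le_div_iff₀ (by linarith)]
  linarith

section RandomWalk

variable {V : Type*} (μ : V → V → ℝ≥0∞)

lemma killedKerN_univ_zero [DecidableEq V] (x y : V) :
    killedKerN μ Set.univ 0 x y = if x = y then 1 else 0 := by
  simp [killedKerN]

lemma killedKerN_univ_add (n m : ℕ) (x y : V) :
    killedKerN μ Set.univ (n + m) x y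
      = ∑' z, killedKerN μ Set.univ n x z * killedKerN μ Set.univ m z y := by
  classical
  induction n generalizing x with
  | zero => simp [killedKerN_univ_zero, ite_mul]
  | succ n ih =>
    rw [Nat.add_right_comm]
    simp only [killedKerN, ih, ← ENNReal.tsum_mul_left, ← ENNReal.tsum_mul_right, mul_assoc]
    exact ENNReal.tsum_comm

lemma tsum_killedKerN_univ (hv0 : ∀ x, vertexWeight μ x ≠ 0) (hvt : ∀ x, vertexWeight μ x ≠ ⊤)
    (n : ℕ) (x : V) : ∑' y, killedKerN μ Set.univ n x y = 1 := by
  classical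
  induction n generalizing x with
  | zero => simp [killedKerN_univ_zero]
  | succ n ih =>
    simp only [killedKerN]
    rw [ENNReal.tsum_comm]
    simp only [ENNReal.tsum_mul_left, ih, mul_one, killedKer, transKer, Set.mem_univ, and_self,
      if_true, div_eq_mul_inv, ENNReal.tsum_mul_right]
    exact ENNReal.mul_inv_cancel (hv0 x) (hvt x)

lemma tsum_killedKerN_univ_mul_green (n : ℕ) (x y : V) :
    ∑' z, killedKerN μ Set.univ n x z * green μ z y
      = ∑' m, killedKerN μ Set.univ (n + m) x y / vertexWeight μ y := by
  simp only [green, greenKilled, killedKerN_univ_add, div_eq_mul_inv, ← ENNReal.tsum_mul_left,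
    ← ENNReal.tsum_mul_right, mul_assoc]
  exact ENNReal.tsum_comm

lemma greenQ_eq_tsum_tsum_killedKerN_univ (hv0 : ∀ x, vertexWeight μ x ≠ 0)
    (hvt : ∀ x, vertexWeight μ x ≠ ⊤) (q : ℝ) (x y : V) :
    greenQ μ q x y = ∑' n, ∑' z, killedKerN μ Set.univ n x z * green μ z y ^ (q - 1) := by
  rw [greenQ, ENNReal.tsum_comm]
  refine tsum_congr fun z => ?_
  rw [green, greenKilled, ← ENNReal.tsum_mul_right, ← ENNReal.tsum_mul_right]
  refine tsum_congr fun n => ?_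
  rw [mul_right_comm, ENNReal.div_mul_cancel (hv0 z) (hvt z)]

theorem tsum_rpow_tsum_killedKerN_univ_le_greenQ (hv0 : ∀ x, vertexWeight μ x ≠ 0)
    (hvt : ∀ x, vertexWeight μ x ≠ ⊤) {q : ℝ} (hq : 2 ≤ q) (x y : V) :
    ∑' n, (∑' m, killedKerN μ Set.univ (n + m) x y / vertexWeight μ y) ^ (q - 1)
      ≤ greenQ μ q x y := by
  rw [greenQ_eq_tsum_tsum_killedKerN_univ μ hv0 hvt]
  refine ENNReal.tsum_le_tsum fun n => ?_
  rw [← tsum_killedKerN_univ_mul_green]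
  exact ENNReal.rpow_tsum_mul_le_tsum_mul_rpow_of_tsum_le_one _ _
    (tsum_killedKerN_univ μ hv0 hvt n x).le (by linarith)

end RandomWalk

theorem greenQ_diagonal_lower_bound_general {V : Type*}
    (μ : V → V → ℝ≥0∞)
    (hfin : ∀ x, vertexWeight μ x < ⊤)
    (b : ℝ≥0∞) (hb : 0 < b) (hbv : ∀ x, b ≤ vertexWeight μ x)
    (p q : ℝ) (hp1 : 1 < p) (hp2 : p ≤ 2) (hpq : 1 / p + 1 / q = 1)
    (o : V) :
    ∑' n : ℕ, (∑' m : ℕ, killedKerN μ Set.univ (n + m) o o / vertexWeight μ o) ^ (q - 1) ≤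
      greenQ μ q o o :=
  tsum_rpow_tsum_killedKerN_univ_le_greenQ μ (fun x => (hb.trans_le (hbv x)).ne')
    (fun x => (hfin x).ne) (two_le_of_one_div_add_one_div_eq_one hp1 hp2 hpq) o o

/-- for `1 < p ≤ 2` with conjugate `q` and vertex weights bounded below
by `b > 0`, the `L^q`-Green function satisfies
`g_q(o,o) ≥ ∑_{n=0}^∞ (∑_{m=n}^∞ p_m(o,o))^{q−1}`,
where `p_m(o,o) = P_m(o,o)/μ(o)` is the on-diagonal heat kernel. -/
theorem greenQ_diagonal_lower_bound {V : Type*}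
    (μ : V → V → ℝ≥0∞)
    (hsym : ∀ x y, μ x y = μ y x)
    (hloc : LocallyFinite' μ)
    (hfin : ∀ x, vertexWeight μ x < ⊤)
    (b : ℝ≥0∞) (hb : 0 < b) (hbv : ∀ x, b ≤ vertexWeight μ x)
    (p q : ℝ) (hp1 : 1 < p) (hp2 : p ≤ 2) (hpq : 1 / p + 1 / q = 1)
    (o : V) :
    ∑' n : ℕ, (∑' m : ℕ, killedKerN μ Set.univ (n + m) o o / vertexWeight μ o) ^ (q - 1) ≤
      greenQ μ q o o :=
  greenQ_diagonal_lower_bound_general μ hfin b hb hbv p q hp1 hp2 hpq o
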